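/- If a reduction step t ▷ t' holds under any of the rules β, δ, γ, or assoc, then for any variable x and term u, t[x:=u] ▷ t'[x:=u] under the same rule. -/
import Mathlib


/-- Untyped λ-terms in de Bruijn representation. -/
inductive Term : Type
  | var : ℕ → Term
  | lam : Term → Term
  | app : Term → Term → Term
  deriving DecidableEq

namespace Term

/-- Shift (lift) all de Bruijn indices ≥ d by one. -/
def lift (d : ℕ) : Term → Term
  | var n => var (if n < d then n else n + 1)
  | lam t => lam (lift (d + 1) t)
  | app t u => app (lift d t) (lift d u)

/-- Capture-avoiding substitution `t[k := u]` (de Bruijn style). -/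
def subst : Term → ℕ → Term → Term
  | var n, k, u => if n = k then u else var (if n < k then n else n - 1)
  | lam t, k, u => lam (subst t (k + 1) (lift 0 u))
  | app t v, k, u => app (subst t k u) (subst v k u)

/-- Swap the de Bruijn indices d and d+1 (exchange of two adjacent binders). -/
def swap (d : ℕ) : Term → Term
  | var n => var (if n = d then d + 1 else if n = d + 1 then d else n)
  | lam t => lam (swap (d + 1) t)
  | app t u => app (swap d t) (swap d u)

end Term

/-- The four reduction rules. -/
inductive Rule | beta | delta | gamma | assoc

/-- One-step reduction by a given rule (closed under congruence).
β: (λx.M N) ▷ M[x:=N];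
δ: (λy.λx.M N) ▷ λx.(λy.M N), x ∉ FV(N);
γ: (λx.M N P) ▷ (λx.(M P) N), x ∉ FV(P);
assoc: (M (λx.N P)) ▷ (λx.(M N) P), x ∉ FV(M).
Freshness conditions are realized by lifting. -/
inductive Step : Rule → Term → Term → Prop
  | beta (M N) : Step .beta (.app (.lam M) N) (Term.subst M 0 N)
  | delta (M N) : Step .delta (.app (.lam (.lam M)) N)
      (.lam (.app (.lam (Term.swap 0 M)) (Term.lift 0 N)))
  | gamma (M N P) : Step .gamma (.app (.app (.lam M) N) P)
      (.app (.lam (.app M (Term.lift 0 P))) N)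
  | assoc (M N P) : Step .assoc (.app M (.app (.lam N) P))
      (.app (.lam (.app (Term.lift 0 M) N)) P)
  | appCongL {r t t'} (u) : Step r t t' → Step r (.app t u) (.app t' u)
  | appCongR {r u u'} (t) : Step r u u' → Step r (.app t u) (.app t u')
  | lamCong {r t t'} : Step r t t' → Step r (.lam t) (.lam t')

/-- One-step reduction by the union of the four rules. -/
def StepAll (t t' : Term) : Prop := ∃ r, Step r t t'

/-- Strong normalization for the union of β, δ, γ, assoc. -/
def SN (t : Term) : Prop := Acc (fun a b => StepAll b a) t

/-- Strong normalization for β alone. -/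
def SNbeta (t : Term) : Prop := Acc (fun a b => Step .beta b a) t

mutual
/-- Simple types: atoms and arrows with simple codomain. -/
inductive STy : Type
  | atom : ℕ → STy
  | arrow : Ty → STy → STy
/-- Types of system D: intersections of simple types. -/
inductive Ty : Type
  | simple : STy → Ty
  | inter : STy → Ty → Ty
end

/-- Typing judgment of system D (contexts are lists of types, de Bruijn). -/
inductive Typing : List Ty → Term → Ty → Prop
  | var {Γ n A} : Γ[n]? = some A → Typing Γ (.var n) A
  | app {Γ M N A B} : Typing Γ M (.simple (.arrow A B)) → Typing Γ N A →
      Typing Γ (.app M N) (.simple B)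
  | lam {Γ M A B} : Typing (A :: Γ) M (.simple B) →
      Typing Γ (.lam M) (.simple (.arrow A B))
  | interI {Γ M A B} : Typing Γ M (.simple A) → Typing Γ M B →
      Typing Γ M (.inter A B)
  | interE1 {Γ M A B} : Typing Γ M (.inter A B) → Typing Γ M (.simple A)
  | interE2 {Γ M A B} : Typing Γ M (.inter A B) → Typing Γ M B

/-- A term is typable in system D. -/
def Typable (t : Term) : Prop := ∃ Γ A, Typing Γ t A

/-- (H M₁ ... Mₙ). -/
def appList (H : Term) (Ms : List Term) : Term := Ms.foldl .app H


namespace Term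

theorem lift_lift (t : Term) : ∀ c c', c' ≤ c → lift (c+1) (lift c' t) = lift c' (lift c t) := by
  induction t with
  | var n =>
    intro c c' h; simp only [lift]
    split_ifs <;> (try simp only [subst, lift, swap]) <;> (try split_ifs) <;>
      (try simp only [subst, lift, swap]) <;> (try split_ifs) <;>
      first | rfl | omega | (exfalso; omega) | (congr 1 <;> omega) | (rw [subst_lift])
  | lam t ih => intro c c' h; simp only [lift]; rw [ih]; omega
  | app a b iha ihb => intro c c' h; simp only [lift, iha _ _ h, ihb _ _ h]

theorem lift_subst (t : Term) : ∀ k u c, c ≤ k →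
    subst (lift c t) (k+1) (lift c u) = lift c (subst t k u) := by
  induction t with
  | var n =>
    intro k u c h; simp only [lift, subst]
    split_ifs <;> (try simp only [subst, lift, swap]) <;> (try split_ifs) <;>
      (try simp only [subst, lift, swap]) <;> (try split_ifs) <;>
      first | rfl | omega | (exfalso; omega) | (congr 1 <;> omega) | (rw [subst_lift])
  | lam t ih =>
    intro k u c h; simp only [lift, subst]
    rw [← lift_lift u c 0 (Nat.zero_le _), ih _ _ (c+1) (by omega)]
  | app a b iha ihb => intro k u c h; simp only [lift, subst, iha _ _ _ h, ihb _ _ _ h]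

theorem subst_lift (t : Term) : ∀ i u, subst (lift i t) i u = t := by
  induction t with
  | var n =>
    intro i u; simp only [lift, subst]
    split_ifs <;> (try simp only [subst, lift, swap]) <;> (try split_ifs) <;>
      (try simp only [subst, lift, swap]) <;> (try split_ifs) <;>
      first | rfl | omega | (exfalso; omega) | (congr 1 <;> omega) | (rw [subst_lift])
  | lam t ih => intro i u; simp only [lift, subst, ih]
  | app a b iha ihb => intro i u; simp only [lift, subst, iha, ihb]

theorem subst_subst (M : Term) : ∀ i j N u, i ≤ j →
    subst (subst M i N) j u = subst (subst M (j+1) (lift i u)) i (subst N j u) := by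
  induction M with
  | var n =>
    intro i j N u h; simp only [subst]
    split_ifs <;> (try simp only [subst, lift, swap]) <;> (try split_ifs) <;>
      (try simp only [subst, lift, swap]) <;> (try split_ifs) <;>
      first | rfl | omega | (exfalso; omega) | (congr 1 <;> omega) | (rw [subst_lift])
  | lam t ih =>
    intro i j N u h; simp only [subst]
    rw [ih _ _ _ _ (by omega : i+1 ≤ j+1), lift_lift u i 0 (Nat.zero_le _),
        lift_subst N j u 0 (Nat.zero_le _)]
  | app a b iha ihb => intro i j N u h; simp only [subst, iha _ _ _ _ h, ihb _ _ _ _ h]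

theorem swap_lift (t : Term) : ∀ c d, c ≤ d → swap (d+1) (lift c t) = lift c (swap d t) := by
  induction t with
  | var n =>
    intro c d h; simp only [lift, swap]
    split_ifs <;> (try simp only [subst, lift, swap]) <;> (try split_ifs) <;>
      (try simp only [subst, lift, swap]) <;> (try split_ifs) <;>
      first | rfl | omega | (exfalso; omega) | (congr 1 <;> omega) | (rw [subst_lift])
  | lam t ih => intro c d h; simp only [lift, swap]; rw [ih _ _ (by omega : c+1 ≤ d+1)]
  | app a b iha ihb => intro c d h; simp only [lift, swap, iha _ _ h, ihb _ _ h]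

theorem swap_lift_lift (t : Term) : ∀ d, swap d (lift d (lift d t)) = lift d (lift d t) := by
  induction t with
  | var n =>
    intro d; simp only [lift, swap]
    split_ifs <;> (try simp only [subst, lift, swap]) <;> (try split_ifs) <;>
      (try simp only [subst, lift, swap]) <;> (try split_ifs) <;>
      first | rfl | omega | (exfalso; omega) | (congr 1 <;> omega) | (rw [subst_lift])
  | lam t ih => intro d; simp only [lift, swap, ih]
  | app a b iha ihb => intro d; simp only [lift, swap, iha, ihb]

theorem swap_subst (M : Term) : ∀ d j u, d+1 < j →
    swap d (subst M j u) = subst (swap d M) j (swap d u) := by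
  induction M with
  | var n =>
    intro d j u h; simp only [subst, swap]
    split_ifs <;> (try simp only [subst, lift, swap]) <;> (try split_ifs) <;>
      (try simp only [subst, lift, swap]) <;> (try split_ifs) <;>
      first | rfl | omega | (exfalso; omega) | (congr 1 <;> omega) | (rw [subst_lift])
  | lam t ih =>
    intro d j u h; simp only [subst, swap]
    rw [ih _ _ _ (by omega : d+1+1 < j+1), swap_lift u 0 d (Nat.zero_le _)]
  | app a b iha ihb => intro d j u h; simp only [subst, swap, iha _ _ _ h, ihb _ _ _ h]

end Term

/-- If t ▷ t' by any rule, then t[x:=u] ▷ t'[x:=u] by the same rule. -/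
theorem step_subst (r : Rule) (t t' u : Term) (k : ℕ) (h : Step r t t') :
    Step r (Term.subst t k u) (Term.subst t' k u) := by
  induction h generalizing k u with
  | beta M N =>
    rw [Term.subst, Term.subst, Term.subst_subst M 0 k N u (Nat.zero_le _)]
    exact Step.beta _ _
  | delta M N =>
    simp only [Term.subst]
    have e : (Term.swap 0 M).subst (k+1+1) (Term.lift 0 (Term.lift 0 u)) =
        Term.swap 0 (M.subst (k+1+1) (Term.lift 0 (Term.lift 0 u))) := by
      rw [Term.swap_subst M 0 (k+1+1) _ (by omega), Term.swap_lift_lift]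
    rw [e, Term.lift_subst N k u 0 (Nat.zero_le _)]
    exact Step.delta _ _
  | gamma M N P =>
    simp only [Term.subst]
    rw [Term.lift_subst P k u 0 (Nat.zero_le _)]
    exact Step.gamma _ _ _
  | assoc M N P =>
    simp only [Term.subst]
    rw [Term.lift_subst M k u 0 (Nat.zero_le _)]
    exact Step.assoc _ _ _
  | appCongL v _ ih => exact Step.appCongL _ (ih u k)
  | appCongR t _ ih => exact Step.appCongR _ (ih u k)
  | lamCong _ ih => exact Step.lamCong (ih (Term.lift 0 u) (k+1))
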